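/- Let U' = G·R with G = 2|ψ₀⟩⟨ψ₀| − I and R = I − 2|m⟩⟨m| on C^N, |ψ₀⟩ the uniform superposition and |m⟩ a marked basis state. Then U' preserves the 2-dimensional real span of {|m⟩, |ψ₀⟩}, and acts on it as a rotation by angle 2·arcsin(1/√N); consequently ⟨m|U'^t|ψ₀⟩ = sin((2t+1)·arcsin(1/√N)). -/

import Mathlib

open Matrix

def gCoef (s : ℝ) : ℕ → ℝ × ℝ
  | 0 => (0, 1)
  | t+1 => ((gCoef s t).1 + 2*s*(gCoef s t).2,
            -(2*s)*(gCoef s t).1 + (1-4*s^2)*(gCoef s t).2)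

lemma gCoef_trig (s : ℝ) (h1 : 0 ≤ s) (h2 : s ≤ 1) (t : ℕ) :
    (gCoef s t).1 + s*(gCoef s t).2 = Real.sin ((2*t+1)*Real.arcsin s)
    ∧ Real.sqrt (1-s^2) * (gCoef s t).2 = Real.cos ((2*t+1)*Real.arcsin s) := by
  have hs2 : 1 - s^2 ≥ 0 := by nlinarith
  have hc2 : Real.sqrt (1-s^2) ^ 2 = 1 - s^2 := Real.sq_sqrt hs2
  set c := Real.sqrt (1-s^2) with hc
  set θ := Real.arcsin s with hθ
  have hsin : Real.sin θ = s := Real.sin_arcsin (by linarith) h2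
  have hcos : Real.cos θ = c := Real.cos_arcsin s
  induction t with
  | zero => simp [gCoef, hsin, hcos]
  | succ t ih =>
    obtain ⟨ih1, ih2⟩ := ih
    have harg : (2*((t:ℝ)+1)+1)*θ = ((2*t+1)*θ) + 2*θ := by ring
    push_cast
    rw [harg, Real.sin_add, Real.cos_add, Real.sin_two_mul, Real.cos_two_mul,
      hsin, hcos, ← ih1, ← ih2]
    constructor
    · show (gCoef s (t+1)).1 + s*(gCoef s (t+1)).2 = _
      simp only [gCoef]
      linear_combination (-(2*(gCoef s t).1 + 4*s*(gCoef s t).2)) * hc2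
    · show c * (gCoef s (t+1)).2 = _
      simp only [gCoef]
      linear_combination (-(2*c*(gCoef s t).2)) * hc2

/-- For the Grover / quantum-walk search operator `U' = G·R` on `ℂ^N` with
`G = 2|ψ₀⟩⟨ψ₀| − I` and `R = I − 2|m⟩⟨m|`, the real span of `{|m⟩, |ψ₀⟩}` is
invariant under `U'`, and `⟨m|U'^t|ψ₀⟩ = sin((2t+1)·arcsin(1/√N))`. -/
theorem grover_iteration_rotation (N : ℕ) (hN : 0 < N) (m : Fin N)
    (ψ0 em : Fin N → ℂ)
    (hψ0 : ∀ x : Fin N, ψ0 x = ((Real.sqrt N)⁻¹ : ℝ))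
    (hem : em = Pi.single m 1)
    (G R U' : Matrix (Fin N) (Fin N) ℂ)
    (hG : G = (2 : ℂ) • Matrix.vecMulVec ψ0 (star ψ0) - 1)
    (hR : R = 1 - (2 : ℂ) • Matrix.vecMulVec em (star em))
    (hU' : U' = G * R) :
    (∀ v ∈ Submodule.span ℝ ({em, ψ0} : Set (Fin N → ℂ)),
        U'.mulVec v ∈ Submodule.span ℝ ({em, ψ0} : Set (Fin N → ℂ))) ∧
      ∀ t : ℕ, (U' ^ t).mulVec ψ0 m =
        ((Real.sin ((2 * t + 1) * Real.arcsin ((Real.sqrt N)⁻¹)) : ℝ) : ℂ) := by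
  set s : ℝ := (Real.sqrt N)⁻¹ with hs
  have hsqrt : (0:ℝ) < Real.sqrt N := Real.sqrt_pos.mpr (by exact_mod_cast hN)
  have hNs : (N:ℝ) * s^2 = 1 := by
    rw [hs, inv_pow, ← Real.sq_sqrt (Nat.cast_nonneg N : (0:ℝ) ≤ N)]
    field_simp
    rw [Real.sqrt_sq hsqrt.le]
  have hNsC : (N:ℂ) * (s:ℂ)^2 = 1 := by exact_mod_cast hNs
  have hs0 : (0:ℝ) ≤ s := by positivity
  have hs1 : s ≤ 1 := by
    rw [hs]
    have h1 : (1:ℝ) ≤ Real.sqrt N := by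
      rw [show (1:ℝ) = Real.sqrt 1 by simp]
      exact Real.sqrt_le_sqrt (by exact_mod_cast hN)
    exact inv_le_one_of_one_le₀ h1
  -- basic vector facts
  have hemm : em m = 1 := by simp [hem]
  have hψm : ψ0 m = (s:ℂ) := hψ0 m
  have hsum_em : ∑ x, em x = 1 := by simp [hem]
  have hsum_ψ : ∑ x, ψ0 x = (N:ℂ) * (s:ℂ) := by
    simp [hψ0, Finset.sum_const, mul_comm]
  have hvm : ∀ (w u x : Fin N → ℂ), (vecMulVec w u) *ᵥ x = (u ⬝ᵥ x) • w := by
    intro w u x; funext i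
    simp [vecMulVec_apply, mulVec, dotProduct, Finset.mul_sum, Finset.sum_mul,
      mul_comm, mul_assoc, mul_left_comm]
  have hstarψ : ∀ x : Fin N → ℂ, star ψ0 ⬝ᵥ x = (s:ℂ) * ∑ j, x j := by
    intro x
    simp [dotProduct, hψ0, Finset.mul_sum]
  have hstarem : ∀ x : Fin N → ℂ, star em ⬝ᵥ x = x m := by
    intro x
    simp [dotProduct, hem, Pi.single_apply, apply_ite]
  have hRv : ∀ x, R *ᵥ x = x - ((2:ℂ) * x m) • em := by
    intro x
    rw [hR, sub_mulVec, one_mulVec, smul_mulVec, hvm, hstarem, smul_smul]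
  have hGv : ∀ x, G *ᵥ x = ((2:ℂ) * ((s:ℂ) * ∑ j, x j)) • ψ0 - x := by
    intro x
    rw [hG, sub_mulVec, one_mulVec, smul_mulVec, hvm, hstarψ, smul_smul]
  have hUv : ∀ x, U' *ᵥ x = G *ᵥ (R *ᵥ x) := by
    intro x; rw [hU', ← mulVec_mulVec]
  have hkey : ∀ α β : ℂ, U' *ᵥ (α • em + β • ψ0)
      = (α + 2*(s:ℂ)*β) • em + (-(2*(s:ℂ))*α + (1-4*(s:ℂ)^2)*β) • ψ0 := by
    intro α β
    rw [hUv, hRv]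
    have h1 : (α • em + β • ψ0) m = α + β * (s:ℂ) := by
      simp [hemm, hψm]
    rw [h1]
    have h2 : (α • em + β • ψ0) - ((2:ℂ) * (α + β * s)) • em
        = (-α - 2*(s:ℂ)*β) • em + β • ψ0 := by module
    rw [h2, hGv]
    have h3 : ∑ j, ((-α - 2*(s:ℂ)*β) • em + β • ψ0) j
        = (-α - 2*(s:ℂ)*β) + β * ((N:ℂ) * s) := by
      simp [Finset.sum_add_distrib, ← Finset.mul_sum, hsum_em, hsum_ψ]
    rw [h3]
    have h4 : ((2:ℂ)*((s:ℂ)*((-α - 2*(s:ℂ)*β) + β*((N:ℂ)*(s:ℂ)))))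
        = (-(2*(s:ℂ))*α + (1-4*(s:ℂ)^2)*β) + β := by linear_combination (2*β)*hNsC
    rw [h4]
    module
  -- real scalars act as complex scalars
  have hrs : ∀ (r : ℝ) (f : Fin N → ℂ), ((r:ℂ)) • f = r • f := by
    intro r f; funext x; simp [Complex.real_smul]
  have hmem : ∀ α β : ℝ, ((α:ℂ)) • em + ((β:ℂ)) • ψ0 ∈
      Submodule.span ℝ ({em, ψ0} : Set (Fin N → ℂ)) := by
    intro α β
    rw [hrs, hrs]
    exact Submodule.add_mem _
      (Submodule.smul_mem _ _ (Submodule.subset_span (by simp)))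
      (Submodule.smul_mem _ _ (Submodule.subset_span (by simp)))
  constructor
  · -- invariance of the span
    intro v hv
    induction hv using Submodule.span_induction with
    | mem x hx =>
      rcases hx with hx | hx
      · subst hx
        have := hkey 1 0
        simp only [one_smul, zero_smul, add_zero, mul_zero, mul_one] at this
        rw [this]
        have h := hmem 1 (-(2*s))
        push_cast at h
        simpa using h
      · simp only [Set.mem_singleton_iff] at hx
        subst hx
        have := hkey 0 1
        simp only [zero_smul, zero_add, mul_zero, mul_one, add_zero, neg_zero,
          one_smul] at this
        rw [this]
        have h := hmem (2*s) (1 - 4*s^2)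
        push_cast at h
        simpa using h
    | zero => simp [Matrix.mulVec_zero, Submodule.zero_mem]
    | add x y hx hy ihx ihy =>
      rw [Matrix.mulVec_add]; exact Submodule.add_mem _ ihx ihy
    | smul r x hx ihx =>
      rw [Matrix.mulVec_smul]; exact Submodule.smul_mem _ _ ihx
  · -- the rotation formula
    have main : ∀ t : ℕ, (U' ^ t) *ᵥ ψ0
        = (((gCoef s t).1 : ℂ)) • em + (((gCoef s t).2 : ℂ)) • ψ0 := by
      intro t
      induction t with
      | zero => simp [gCoef]
      | succ t ih =>
        rw [pow_succ', ← mulVec_mulVec, ih, hkey]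
        simp only [gCoef]
        push_cast
        ring_nf
    intro t
    rw [main t]
    have := (gCoef_trig s hs0 hs1 t).1
    simp only [Pi.add_apply, Pi.smul_apply, hemm, hψm, smul_eq_mul, mul_one]
    rw [← this]
    push_cast
    ring
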